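/- arXiv:2402.08248 — 2 statements merged into one kernel-verified Lean document; each statement's English description precedes it below -/
import Mathlib

section
/- Let W_n (n ≥ 3) be the wheel graph. Then RL1(W_n) = n(n^2 + 3n + 36), RL2(W_n) = n(n^2 − 3n + 18), RL3(W_n) = 2n(2n + 3), and RL4(W_n) = 3n^2 |n − 3|. -/
open Finset SimpleGraph

variable {V : Type*}

/-- The degree of a vertex, as a real number. -/
noncomputable def deg [Fintype V] (G : SimpleGraph V) (v : V) : ℝ :=
  haveI := Classical.decEq V
  haveI : DecidableRel G.Adj := Classical.decRel _
  (G.degree v : ℝ)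

/-- Sum of a symmetric function of the two endpoints, over the edges of `G`
(each edge counted once). -/
noncomputable def edgeSum [Fintype V] (G : SimpleGraph V)
    (f : V → V → ℝ) (hf : ∀ u v, f u v = f v u) : ℝ :=
  haveI := Classical.decEq V
  haveI : DecidableRel G.Adj := Classical.decRel _
  ∑ e ∈ G.edgeFinset, Sym2.lift ⟨f, hf⟩ e

/-- The first Rehan–Lanel index: `RL₁(G) = Σ_{uv∈E(G)} (d(u)² + d(v)² + d(u)d(v))`. -/
noncomputable def RL1 [Fintype V] (G : SimpleGraph V) : ℝ :=
  edgeSum G (fun u v => deg G u ^ 2 + deg G v ^ 2 + deg G u * deg G v)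
    (fun u v => by ring)

/-- The second Rehan–Lanel index: `RL₂(G) = Σ_{uv∈E(G)} (d(u)² + d(v)² − d(u)d(v))`. -/
noncomputable def RL2 [Fintype V] (G : SimpleGraph V) : ℝ :=
  edgeSum G (fun u v => deg G u ^ 2 + deg G v ^ 2 - deg G u * deg G v)
    (fun u v => by ring)

/-- The third Rehan–Lanel index: `RL₃(G) = Σ_{uv∈E(G)} (|d(u) − d(v)| + d(u)d(v))`. -/
noncomputable def RL3 [Fintype V] (G : SimpleGraph V) : ℝ :=
  edgeSum G (fun u v => |deg G u - deg G v| + deg G u * deg G v)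
    (fun u v => by (try dsimp only); rw [abs_sub_comm]; ring)

/-- The fourth Rehan–Lanel index: `RL₄(G) = Σ_{uv∈E(G)} |d(u) − d(v)|·d(u)d(v)`. -/
noncomputable def RL4 [Fintype V] (G : SimpleGraph V) : ℝ :=
  edgeSum G (fun u v => |deg G u - deg G v| * (deg G u * deg G v))
    (fun u v => by (try dsimp only); rw [abs_sub_comm]; ring)

/-- The wheel graph `Wₙ`: the join of a single hub vertex (`none`) with the
cycle `Cₙ` (on the vertices `some i`). -/
def wheelGraph (n : ℕ) : SimpleGraph (Option (Fin n)) :=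
  SimpleGraph.fromRel (fun u v =>
    u = none ∨ ∃ i j, u = some i ∧ v = some j ∧ (SimpleGraph.cycleGraph n).Adj i j)

/-!
The wheel `Wₙ` has `n` spokes, joining the hub of degree `n` to a rim vertex of degree `3`, and
`n` rim edges, joining two vertices of degree `3`. Hence every edge sum of a symmetric function
`g` of the end degrees equals `n g(n, 3) + n g(3, 3)`, and each index is a polynomial identity.
-/

lemma deg_eq_degree [Fintype V] (G : SimpleGraph V) (v : V) [Fintype (G.neighborSet v)] :
    deg G v = G.degree v := by
  unfold deg
  congr!

lemma edgeSum_eq_sum [Fintype V] (G : SimpleGraph V) [Fintype G.edgeSet]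
    (f : V → V → ℝ) (hf : ∀ u v, f u v = f v u) :
    edgeSum G f hf = ∑ e ∈ G.edgeFinset, Sym2.lift ⟨f, hf⟩ e := by
  unfold edgeSum
  congr!

lemma edgeSum_eq_card_edgeSet_mul [Fintype V] (G : SimpleGraph V)
    (f : V → V → ℝ) (hf : ∀ u v, f u v = f v u) (c : ℝ)
    (hc : ∀ u v, G.Adj u v → f u v = c) :
    edgeSum G f hf = Nat.card G.edgeSet * c := by
  classical
  rw [edgeSum_eq_sum, Finset.sum_congr rfl (g := fun _ => c), Finset.sum_const, nsmul_eq_mul,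
    edgeFinset_card, Nat.card_eq_fintype_card]
  intro e he
  induction e using Sym2.ind with
  | _ u v => exact hc u v (mem_edgeFinset.mp he)

lemma card_edgeSet_cycleGraph {n : ℕ} (hn : 3 ≤ n) : Nat.card (cycleGraph n).edgeSet = n := by
  classical
  obtain ⟨m, rfl⟩ := Nat.exists_eq_add_of_le' hn
  have h := sum_degrees_eq_twice_card_edges (cycleGraph (m + 3))
  simp only [cycleGraph_degree_three_le, Finset.sum_const, Finset.card_univ, Fintype.card_fin,
    smul_eq_mul] at h
  rw [Nat.card_eq_fintype_card, ← edgeFinset_card]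
  omega

@[simp]
lemma wheelGraph_adj_none {n : ℕ} {v : Option (Fin n)} :
    (wheelGraph n).Adj none v ↔ v ≠ none := by
  simp [wheelGraph, eq_comm]

@[simp]
lemma wheelGraph_adj_some_none {n : ℕ} {i : Fin n} : (wheelGraph n).Adj (some i) none := by
  simp [wheelGraph]

@[simp]
lemma wheelGraph_adj_some_some {n : ℕ} {i j : Fin n} :
    (wheelGraph n).Adj (some i) (some j) ↔ (cycleGraph n).Adj i j := by
  simpa [wheelGraph, (cycleGraph n).adj_comm j i] using Adj.ne

lemma degree_wheelGraph_none {n : ℕ} [Fintype ((wheelGraph n).neighborSet none)] :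
    (wheelGraph n).degree none = n := by
  classical
  have h : (wheelGraph n).neighborFinset none = Finset.univ.erase none := by
    ext v
    simp
  rw [← card_neighborFinset_eq_degree, h, Finset.card_erase_of_mem (Finset.mem_univ _)]
  simp

lemma degree_wheelGraph_some {n : ℕ} (hn : 3 ≤ n) (i : Fin n)
    [Fintype ((wheelGraph n).neighborSet (some i))] :
    (wheelGraph n).degree (some i) = 3 := by
  classical
  obtain ⟨m, rfl⟩ := Nat.exists_eq_add_of_le' hn
  have h : (wheelGraph (m + 3)).neighborFinset (some i) =
      Finset.cons none (((cycleGraph (m + 3)).neighborFinset i).map .some) (by simp) := by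
    ext (_ | j) <;> simp
  rw [← card_neighborFinset_eq_degree, h, Finset.card_cons, Finset.card_map,
    card_neighborFinset_eq_degree, cycleGraph_degree_three_le]

lemma edgeFinset_wheelGraph (n : ℕ) [Fintype (wheelGraph n).edgeSet] :
    (wheelGraph n).edgeFinset =
      (Finset.univ.image fun i => s(none, some i)) ∪
        (cycleGraph n).edgeFinset.map (Function.Embedding.some.sym2Map) := by
  ext e
  induction e using Sym2.ind with
  | _ u v =>
    rcases u with _ | i <;> rcases v with _ | j <;>
      simp [Sym2.exists, and_or_left, exists_or, SimpleGraph.adj_comm]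

lemma edgeSum_wheelGraph (n : ℕ) (f : Option (Fin n) → Option (Fin n) → ℝ)
    (hf : ∀ u v, f u v = f v u) :
    edgeSum (wheelGraph n) f hf =
      ∑ i, f none (some i) +
        edgeSum (cycleGraph n) (fun i j => f (some i) (some j)) (fun _ _ => hf _ _) := by
  classical
  have hdisj : Disjoint (Finset.univ.image fun i => s(none, some i))
      ((cycleGraph n).edgeFinset.map Function.Embedding.some.sym2Map) := by
    simp [Finset.disjoint_left, Sym2.exists]
  rw [edgeSum_eq_sum, edgeSum_eq_sum, edgeFinset_wheelGraph, Finset.sum_union hdisj,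
    Finset.sum_image fun i _ j _ h => Option.some_injective _ (Sym2.congr_right.mp h),
    Finset.sum_map]
  congr 1
  refine Finset.sum_congr rfl fun e _ => ?_
  induction e using Sym2.ind with
  | _ i j => rfl

lemma edgeSum_wheelGraph_of_degrees {n : ℕ} (hn : 3 ≤ n) (g : ℝ → ℝ → ℝ)
    (hg : ∀ a b, g a b = g b a) :
    edgeSum (wheelGraph n) (fun u v => g (deg (wheelGraph n) u) (deg (wheelGraph n) v))
      (fun _ _ => hg _ _) = n * g n 3 + n * g 3 3 := by
  classical
  have hdeg_some (i : Fin n) : deg (wheelGraph n) (some i) = 3 := by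
    rw [deg_eq_degree, degree_wheelGraph_some hn, Nat.cast_ofNat]
  rw [edgeSum_wheelGraph,
    edgeSum_eq_card_edgeSet_mul _ _ _ (g 3 3) fun i j _ => by simp only [hdeg_some],
    card_edgeSet_cycleGraph hn]
  simp [hdeg_some, deg_eq_degree, degree_wheelGraph_none]

/-- For the wheel graph `Wₙ` (`n ≥ 3`):
`RL₁ = n(n² + 3n + 36)`, `RL₂ = n(n² − 3n + 18)`,
`RL₃ = 2n(2n + 3)`, `RL₄ = 3n²|n − 3|`. -/
theorem RL_wheelGraph (n : ℕ) (hn : 3 ≤ n) :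
    RL1 (wheelGraph n) = n * ((n : ℝ) ^ 2 + 3 * n + 36) ∧
      RL2 (wheelGraph n) = n * ((n : ℝ) ^ 2 - 3 * n + 18) ∧
      RL3 (wheelGraph n) = 2 * n * (2 * (n : ℝ) + 3) ∧
      RL4 (wheelGraph n) = 3 * (n : ℝ) ^ 2 * |(n : ℝ) - 3| := by
  have h3 : (0 : ℝ) ≤ n - 3 := sub_nonneg.mpr (by exact_mod_cast hn)
  refine ⟨?_, ?_, ?_, ?_⟩
  · exact (edgeSum_wheelGraph_of_degrees hn (fun a b => a ^ 2 + b ^ 2 + a * b)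
      fun a b => by ring).trans (by ring)
  · exact (edgeSum_wheelGraph_of_degrees hn (fun a b => a ^ 2 + b ^ 2 - a * b)
      fun a b => by ring).trans (by ring)
  · exact (edgeSum_wheelGraph_of_degrees hn (fun a b => |a - b| + a * b)
      fun a b => by rw [abs_sub_comm]; ring).trans (by simp [abs_of_nonneg h3]; ring)
  · exact (edgeSum_wheelGraph_of_degrees hn (fun a b => |a - b| * (a * b))
      fun a b => by rw [abs_sub_comm]; ring).trans (by simp; ring)
end

section
/- Let K_{m,n} be the complete bipartite graph with parts of sizes m and n, where 1 ≤ m ≤ n and n ≥ 2. Then BRL1(K_{m,n}) = (m+n−2)^2 (m^2 + n^2 + mn)/(mn), BRL2(K_{m,n}) = (m+n−2)^2 (m^2 + n^2 − mn)/(mn), BRL3(K_{m,n}) = 2(m+n−2)(n−1), and BRL4(K_{m,n}) = (m+n−2)^3 (n−m)/(mn). -/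
open Finset SimpleGraph

variable {V : Type*}

/-- The Banhatti degree of the endpoint `u` of an edge `uv`:
`B(u) = (d(u) + d(v) − 2)/(n − d(u))` where `n` is the number of vertices. -/
noncomputable def bdeg [Fintype V] (G : SimpleGraph V) (u v : V) : ℝ :=
  (deg G u + deg G v - 2) / ((Fintype.card V : ℝ) - deg G u)

/-- The first Banhatti Rehan–Lanel index:
`BRL₁(G) = Σ_{uv∈E(G)} (B(u)² + B(v)² + B(u)B(v))`. -/
noncomputable def BRL1 [Fintype V] (G : SimpleGraph V) : ℝ :=
  edgeSum G (fun u v => bdeg G u v ^ 2 + bdeg G v u ^ 2 + bdeg G u v * bdeg G v u)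
    (fun u v => by (try dsimp only); ring)

/-- The second Banhatti Rehan–Lanel index:
`BRL₂(G) = Σ_{uv∈E(G)} (B(u)² + B(v)² − B(u)B(v))`. -/
noncomputable def BRL2 [Fintype V] (G : SimpleGraph V) : ℝ :=
  edgeSum G (fun u v => bdeg G u v ^ 2 + bdeg G v u ^ 2 - bdeg G u v * bdeg G v u)
    (fun u v => by (try dsimp only); ring)

/-- The third Banhatti Rehan–Lanel index:
`BRL₃(G) = Σ_{uv∈E(G)} (|B(u) − B(v)| + B(u)B(v))`. -/
noncomputable def BRL3 [Fintype V] (G : SimpleGraph V) : ℝ :=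
  edgeSum G (fun u v => |bdeg G u v - bdeg G v u| + bdeg G u v * bdeg G v u)
    (fun u v => by (try dsimp only); rw [abs_sub_comm]; ring)

/-- The fourth Banhatti Rehan–Lanel index:
`BRL₄(G) = Σ_{uv∈E(G)} |B(u) − B(v)|·B(u)B(v)`. -/
noncomputable def BRL4 [Fintype V] (G : SimpleGraph V) : ℝ :=
  edgeSum G (fun u v => |bdeg G u v - bdeg G v u| * (bdeg G u v * bdeg G v u))
    (fun u v => by (try dsimp only); rw [abs_sub_comm]; ring)

/-! Every edge of `K_{m,n}` joins a vertex of degree `n` to one of degree `m`, so all `mn` edges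
carry the same pair of Banhatti degrees `((m+n-2)/m, (m+n-2)/n)`, the first being the larger
when `m ≤ n`. Each index is therefore `mn` times its summand at that pair. -/

section completeBipartiteGraph

variable {α β : Type*} [Fintype α] [Fintype β]

lemma deg_completeBipartiteGraph_inl (a : α) :
    deg (completeBipartiteGraph α β) (Sum.inl a) = Fintype.card β := by
  classical
  rw [deg, ← card_neighborSet_eq_degree]
  have : (completeBipartiteGraph α β).neighborSet (Sum.inl a) = Set.range Sum.inr := by
    ext (w | w) <;> simp
  simp only [this, Set.card_range_of_injective Sum.inr_injective]

lemma deg_completeBipartiteGraph_inr (b : β) :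
    deg (completeBipartiteGraph α β) (Sum.inr b) = Fintype.card α := by
  classical
  rw [deg, ← card_neighborSet_eq_degree]
  have : (completeBipartiteGraph α β).neighborSet (Sum.inr b) = Set.range Sum.inl := by
    ext (w | w) <;> simp
  simp only [this, Set.card_range_of_injective Sum.inl_injective]

lemma bdeg_completeBipartiteGraph_inl (a : α) (b : β) :
    bdeg (completeBipartiteGraph α β) (Sum.inl a) (Sum.inr b) =
      ((Fintype.card α : ℝ) + Fintype.card β - 2) / Fintype.card α := by
  rw [bdeg, deg_completeBipartiteGraph_inl, deg_completeBipartiteGraph_inr, Fintype.card_sum]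
  push_cast
  ring_nf

lemma bdeg_completeBipartiteGraph_inr (a : α) (b : β) :
    bdeg (completeBipartiteGraph α β) (Sum.inr b) (Sum.inl a) =
      ((Fintype.card α : ℝ) + Fintype.card β - 2) / Fintype.card β := by
  rw [bdeg, deg_completeBipartiteGraph_inl, deg_completeBipartiteGraph_inr, Fintype.card_sum]
  push_cast
  ring_nf

lemma edgeSum_completeBipartiteGraph (f : α ⊕ β → α ⊕ β → ℝ) (hf : ∀ u v, f u v = f v u) :
    edgeSum (completeBipartiteGraph α β) f hf = ∑ p : α × β, f (Sum.inl p.1) (Sum.inr p.2) := by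
  classical
  have hedges : (completeBipartiteGraph α β).edgeFinset =
      univ.map ⟨fun p : α × β ↦ s(Sum.inl p.1, Sum.inr p.2), fun p q h ↦ by aesop⟩ := by
    rw [← coe_inj, coe_edgeFinset, edgeSet_completeBipartiteGraph, coe_map, coe_univ,
      Set.image_univ]
    rfl
  rw [edgeSum, hedges, sum_map]
  rfl

lemma edgeSum_completeBipartiteGraph_of_forall {f : α ⊕ β → α ⊕ β → ℝ}
    (hf : ∀ u v, f u v = f v u) {c : ℝ} (hc : ∀ a b, f (Sum.inl a) (Sum.inr b) = c) :
    edgeSum (completeBipartiteGraph α β) f hf = Fintype.card α * Fintype.card β * c := by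
  simp only [edgeSum_completeBipartiteGraph, hc, sum_const, card_univ, Fintype.card_prod,
    nsmul_eq_mul, Nat.cast_mul]

end completeBipartiteGraph

theorem BRL_completeBipartiteGraph_general (m n : ℕ) (hm : 1 ≤ m) (hmn : m ≤ n) :
    BRL1 (completeBipartiteGraph (Fin m) (Fin n)) =
        ((m : ℝ) + n - 2) ^ 2 * ((m : ℝ) ^ 2 + (n : ℝ) ^ 2 + m * n) / (m * n) ∧
      BRL2 (completeBipartiteGraph (Fin m) (Fin n)) =
        ((m : ℝ) + n - 2) ^ 2 * ((m : ℝ) ^ 2 + (n : ℝ) ^ 2 - m * n) / (m * n) ∧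
      BRL3 (completeBipartiteGraph (Fin m) (Fin n)) =
        2 * ((m : ℝ) + n - 2) * ((n : ℝ) - 1) ∧
      BRL4 (completeBipartiteGraph (Fin m) (Fin n)) =
        ((m : ℝ) + n - 2) ^ 3 * ((n : ℝ) - m) / (m * n) := by
  have hm₀ : (m : ℝ) ≠ 0 := Nat.cast_ne_zero.2 (by omega)
  have hn₀ : (n : ℝ) ≠ 0 := Nat.cast_ne_zero.2 (by omega)
  have hB_left {a b} : bdeg (completeBipartiteGraph (Fin m) (Fin n)) (.inl a) (.inr b) =
      ((m : ℝ) + n - 2) / m := by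
    simpa using bdeg_completeBipartiteGraph_inl a b
  have hB_right {a b} : bdeg (completeBipartiteGraph (Fin m) (Fin n)) (.inr b) (.inl a) =
      ((m : ℝ) + n - 2) / n := by
    simpa using bdeg_completeBipartiteGraph_inr a b
  have habs : |((m : ℝ) + n - 2) / m - (m + n - 2) / n| = (m + n - 2) / m - (m + n - 2) / n := by
    have hm' : (1 : ℝ) ≤ m := by exact_mod_cast hm
    have hmn' : (m : ℝ) ≤ n := by exact_mod_cast hmn
    exact abs_of_nonneg (sub_nonneg.2 (div_le_div_of_nonneg_left (by linarith) (by linarith) hmn'))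
  refine ⟨?_, ?_, ?_, ?_⟩ <;>
    [rw [BRL1]; rw [BRL2]; rw [BRL3]; rw [BRL4]] <;>
    rw [edgeSum_completeBipartiteGraph_of_forall _ fun a b ↦ by rw [hB_left, hB_right]] <;>
    simp only [Fintype.card_fin, habs] <;>
    field_simp <;>
    ring

/-- For the complete bipartite graph `K_{m,n}` with `1 ≤ m ≤ n`, `n ≥ 2`:
`BRL₁ = (m+n−2)²(m² + n² + mn)/(mn)`, `BRL₂ = (m+n−2)²(m² + n² − mn)/(mn)`,
`BRL₃ = 2(m+n−2)(n−1)`, `BRL₄ = (m+n−2)³(n−m)/(mn)`. -/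
theorem BRL_completeBipartiteGraph (m n : ℕ) (hm : 1 ≤ m) (hmn : m ≤ n) (hn : 2 ≤ n) :
    BRL1 (completeBipartiteGraph (Fin m) (Fin n)) =
        ((m : ℝ) + n - 2) ^ 2 * ((m : ℝ) ^ 2 + (n : ℝ) ^ 2 + m * n) / (m * n) ∧
      BRL2 (completeBipartiteGraph (Fin m) (Fin n)) =
        ((m : ℝ) + n - 2) ^ 2 * ((m : ℝ) ^ 2 + (n : ℝ) ^ 2 - m * n) / (m * n) ∧
      BRL3 (completeBipartiteGraph (Fin m) (Fin n)) =
        2 * ((m : ℝ) + n - 2) * ((n : ℝ) - 1) ∧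
      BRL4 (completeBipartiteGraph (Fin m) (Fin n)) =
        ((m : ℝ) + n - 2) ^ 3 * ((n : ℝ) - m) / (m * n) :=
  BRL_completeBipartiteGraph_general m n hm hmn
end
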